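/- Let S ⊆ ℝ^d be nonempty closed, c ∉ S with two distinct nearest points x_l ≠ x_r (with respect to a strictly convex norm, e.g., the Euclidean norm), and suppose the distance function φ_S is differentiable at all points of the open segments z_l^δ = c − δ(c − x_l) and z_r^δ = c − δ(c − x_r) for small δ > 0 with ∇φ_S(z^δ) = (z^δ − x)/‖z^δ − x‖ where x is the unique nearest point. Then lim_{δ→0} ∇φ_S(z_l^δ) = (c − x_l)/‖c − x_l‖ ≠ (c − x_r)/‖c − x_r‖ = lim_{δ→0} ∇φ_S(z_r^δ); hence φ_S is not differentiable at c. -/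

import Mathlib

open Metric Filter Topology

/-!
Along the segment from `c` to a nearest point `x` the distance function decreases at unit
speed, so its derivative `L` at `c`, if it existed, would satisfy `L (c - x) = ‖c - x‖` for
both nearest points. Since `φ_S` is `1`-Lipschitz, `‖L‖ ≤ 1`, and then
`‖(c - x_l) + (c - x_r)‖ = ‖c - x_l‖ + ‖c - x_r‖`, which strict convexity of the norm forbids
for `x_l ≠ x_r`. The gradient limits are immediate: along each segment the normalized vector
`(z^δ - x)/‖z^δ - x‖` does not depend on `δ`.
-/

open NormedSpace

section

variable {E : Type*} [NormedAddCommGroup E] [NormedSpace ℝ E]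

theorem eq_of_norm_eq_of_normalize_eq {u v : E} (hnorm : ‖u‖ = ‖v‖)
    (h : normalize u = normalize v) : u = v := by
  rw [← norm_smul_normalize u, ← norm_smul_normalize v, hnorm, h]

theorem normalize_sub_smul_sub_sub (c x : E) {δ : ℝ} (hδ : δ < 1) :
    normalize (c - δ • (c - x) - x) = normalize (c - x) := by
  have hseg : c - δ • (c - x) - x = (1 - δ) • (c - x) := by
    rw [sub_smul, one_smul]; abel
  rw [hseg, normalize_smul_of_pos (by linarith)]

theorem tendsto_nhdsGT_zero_of_eq_normalize_segment {g : ℝ → E} {c x : E}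
    (hg : ∀ δ ∈ Set.Ioo (0 : ℝ) 1, g δ = normalize (c - δ • (c - x) - x)) :
    Tendsto g (𝓝[>] 0) (𝓝 (normalize (c - x))) := by
  refine tendsto_const_nhds.congr' ?_
  filter_upwards [Ioo_mem_nhdsGT zero_lt_one] with δ hδ
  rw [hg δ hδ, normalize_sub_smul_sub_sub c x hδ.2]

theorem infDist_lineMap_of_dist_eq_infDist {S : Set E} {c x : E} (hx : x ∈ S)
    (hcx : dist c x = infDist c S) {t : ℝ} (ht : t ∈ Set.Icc (0 : ℝ) 1) :
    infDist (AffineMap.lineMap c x t) S = (1 - t) * infDist c S := by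
  have hto : dist (AffineMap.lineMap c x t) x = (1 - t) * infDist c S := by
    rw [dist_lineMap_right, Real.norm_of_nonneg (by linarith [ht.2]), hcx]
  have hfrom : dist c (AffineMap.lineMap c x t) = t * infDist c S := by
    rw [dist_left_lineMap, Real.norm_of_nonneg ht.1, hcx]
  have hle := hto ▸ infDist_le_dist_of_mem hx
  have hge := hfrom ▸ infDist_le_infDist_add_dist (x := c) (y := AffineMap.lineMap c x t) (s := S)
  linarith

theorem HasFDerivAt.apply_sub_eq_neg_infDist {S : Set E} {c x : E} {L : E →L[ℝ] ℝ}
    (hL : HasFDerivAt (infDist · S) L c) (hx : x ∈ S) (hcx : dist c x = infDist c S) :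
    L (x - c) = -infDist c S := by
  have hcomp : HasDerivWithinAt (fun t : ℝ => infDist (AffineMap.lineMap c x t) S) (L (x - c))
      (Set.Ici 0) 0 := by
    have hline : HasDerivAt (AffineMap.lineMap c x : ℝ → E) (x - c) 0 :=
      AffineMap.hasDerivAt_lineMap
    have hL0 : HasFDerivAt (infDist · S) L (AffineMap.lineMap c x (0 : ℝ)) := by
      rwa [AffineMap.lineMap_apply_zero]
    exact (hL0.comp_hasDerivAt 0 hline).hasDerivWithinAt
  have hlinear : HasDerivWithinAt (fun t : ℝ => (1 - t) * infDist c S) (-infDist c S)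
      (Set.Ici 0) 0 := by
    simpa using (((hasDerivAt_id (0 : ℝ)).const_sub 1).mul_const (infDist c S)).hasDerivWithinAt
  have heq : (fun t : ℝ => infDist (AffineMap.lineMap c x t) S) =ᶠ[𝓝[Set.Ici 0] 0]
      fun t => (1 - t) * infDist c S := by
    filter_upwards [Icc_mem_nhdsGE (zero_lt_one' ℝ)] with t ht
    exact infDist_lineMap_of_dist_eq_infDist hx hcx ht
  exact (uniqueDiffOn_Ici 0 0 Set.self_mem_Ici).eq_deriv _ (hcomp.congr_of_eventuallyEq heq.symm
    (by simp)) hlinear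

theorem eq_of_opNorm_le_one_of_apply_eq_norm [StrictConvexSpace ℝ E] {f : E →L[ℝ] ℝ}
    (hf : ‖f‖ ≤ 1) {u v : E} (hnorm : ‖u‖ = ‖v‖) (hu : f u = ‖u‖) (hv : f v = ‖v‖) :
    u = v := by
  refine eq_of_norm_eq_of_norm_add_eq hnorm (le_antisymm (norm_add_le u v) ?_)
  calc ‖u‖ + ‖v‖ = f (u + v) := by rw [map_add, hu, hv]
    _ ≤ ‖f (u + v)‖ := le_abs_self _
    _ ≤ ‖f‖ * ‖u + v‖ := f.le_opNorm _
    _ ≤ ‖u + v‖ := mul_le_of_le_one_left (norm_nonneg _) hf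

theorem not_differentiableAt_infDist_of_ne [StrictConvexSpace ℝ E] {S : Set E} {c x y : E}
    (hx : x ∈ S) (hy : y ∈ S) (hcx : dist c x = infDist c S) (hcy : dist c y = infDist c S)
    (hne : x ≠ y) : ¬DifferentiableAt ℝ (infDist · S) c := by
  intro hdiff
  have hL : ‖fderiv ℝ (infDist · S) c‖ ≤ 1 := by
    simpa using norm_fderiv_le_of_lipschitz ℝ (lipschitz_infDist_pt S)
  have hdir : ∀ z ∈ S, dist c z = infDist c S → fderiv ℝ (infDist · S) c (c - z) = ‖c - z‖ := by
    intro z hz hcz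
    rw [← neg_sub, map_neg, hdiff.hasFDerivAt.apply_sub_eq_neg_infDist hz hcz, neg_neg,
      ← hcz, dist_eq_norm, neg_sub]
  refine hne (sub_right_injective (eq_of_opNorm_le_one_of_apply_eq_norm hL ?_
    (hdir x hx hcx) (hdir y hy hcy)))
  rw [← dist_eq_norm, ← dist_eq_norm, hcx, hcy]

end

theorem distance_function_not_differentiable_on_medial_axis_general
    {d : ℕ} (S : Set (EuclideanSpace ℝ (Fin d)))
    (c xl xr : EuclideanSpace ℝ (Fin d))
    (hxl : xl ∈ S) (hxr : xr ∈ S) (hne : xl ≠ xr)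
    (hl : dist c xl = infDist c S) (hr : dist c xr = infDist c S)
    (φ : EuclideanSpace ℝ (Fin d) → ℝ) (hφ : φ = fun x => infDist x S)
    (hdiffl : ∀ δ ∈ Set.Ioo (0 : ℝ) 1,
      DifferentiableAt ℝ φ (c - δ • (c - xl)) ∧
        gradient φ (c - δ • (c - xl)) =
          ‖c - δ • (c - xl) - xl‖⁻¹ • (c - δ • (c - xl) - xl))
    (hdiffr : ∀ δ ∈ Set.Ioo (0 : ℝ) 1,
      DifferentiableAt ℝ φ (c - δ • (c - xr)) ∧
        gradient φ (c - δ • (c - xr)) =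
          ‖c - δ • (c - xr) - xr‖⁻¹ • (c - δ • (c - xr) - xr)) :
    Tendsto (fun δ : ℝ => gradient φ (c - δ • (c - xl))) (𝓝[>] 0)
        (𝓝 (‖c - xl‖⁻¹ • (c - xl))) ∧
      Tendsto (fun δ : ℝ => gradient φ (c - δ • (c - xr))) (𝓝[>] 0)
        (𝓝 (‖c - xr‖⁻¹ • (c - xr))) ∧
      ‖c - xl‖⁻¹ • (c - xl) ≠ ‖c - xr‖⁻¹ • (c - xr) ∧
      ¬ DifferentiableAt ℝ φ c := by
  subst hφ
  have hnorm : ‖c - xl‖ = ‖c - xr‖ := by rw [← dist_eq_norm, ← dist_eq_norm, hl, hr]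
  refine ⟨tendsto_nhdsGT_zero_of_eq_normalize_segment fun δ hδ => (hdiffl δ hδ).2,
    tendsto_nhdsGT_zero_of_eq_normalize_segment fun δ hδ => (hdiffr δ hδ).2,
    fun h => hne (sub_right_injective (eq_of_norm_eq_of_normalize_eq hnorm h)),
    not_differentiableAt_infDist_of_ne hxl hxr hl hr hne⟩

/-- Non-differentiability of the distance function at a point of the medial axis: if `c` has
two distinct nearest points `x_l ≠ x_r` in `S` and the gradient of `φ_S` along the segments
`z^δ = c − δ(c − x)` is `(z^δ − x)/‖z^δ − x‖`, then the two gradient limits as `δ → 0⁺` are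
`(c − x_l)/‖c − x_l‖ ≠ (c − x_r)/‖c − x_r‖`, and `φ_S` is not differentiable at `c`. -/
theorem distance_function_not_differentiable_on_medial_axis
    {d : ℕ} (S : Set (EuclideanSpace ℝ (Fin d))) (hS : S.Nonempty) (hSclosed : IsClosed S)
    (c xl xr : EuclideanSpace ℝ (Fin d)) (hc : c ∉ S)
    (hxl : xl ∈ S) (hxr : xr ∈ S) (hne : xl ≠ xr)
    (hl : dist c xl = infDist c S) (hr : dist c xr = infDist c S)
    (φ : EuclideanSpace ℝ (Fin d) → ℝ) (hφ : φ = fun x => infDist x S)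
    (hdiffl : ∀ δ ∈ Set.Ioo (0 : ℝ) 1,
      DifferentiableAt ℝ φ (c - δ • (c - xl)) ∧
        gradient φ (c - δ • (c - xl)) =
          ‖c - δ • (c - xl) - xl‖⁻¹ • (c - δ • (c - xl) - xl))
    (hdiffr : ∀ δ ∈ Set.Ioo (0 : ℝ) 1,
      DifferentiableAt ℝ φ (c - δ • (c - xr)) ∧
        gradient φ (c - δ • (c - xr)) =
          ‖c - δ • (c - xr) - xr‖⁻¹ • (c - δ • (c - xr) - xr)) :
    Tendsto (fun δ : ℝ => gradient φ (c - δ • (c - xl))) (𝓝[>] 0)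
        (𝓝 (‖c - xl‖⁻¹ • (c - xl))) ∧
      Tendsto (fun δ : ℝ => gradient φ (c - δ • (c - xr))) (𝓝[>] 0)
        (𝓝 (‖c - xr‖⁻¹ • (c - xr))) ∧
      ‖c - xl‖⁻¹ • (c - xl) ≠ ‖c - xr‖⁻¹ • (c - xr) ∧
      ¬ DifferentiableAt ℝ φ c :=
  distance_function_not_differentiable_on_medial_axis_general S c xl xr hxl hxr hne hl hr φ hφ
    hdiffl hdiffr
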